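/- Let $u$ and $v$ be Borel probability measures on $\mathbb{R}$ with finite second moments, with quantile functions $G_u$ and $G_v$. Let $\pi^*$ be the pushforward of the uniform probability measure on $(0,1)$ under the map $p \mapsto (G_u(p), G_v(p))$ (the monotone coupling). Then $\pi^*$ is a coupling of $u$ and $v$, its transport cost satisfies $\int (x-y)^2\, d\pi^*(x,y) = \int_0^1 (G_u(p)-G_v(p))^2\, dp$, and this cost is less than or equal to $\int (x-y)^2\, d\pi(x,y)$ for every coupling $\pi$ of $u$ and $v$; in particular the infimum in the Kantorovich problem with quadratic cost is attained. -/

import Mathlib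

open MeasureTheory Set

/-- Cumulative distribution function of a measure on `ℝ`. -/
noncomputable def cdfFn (u : Measure ℝ) (x : ℝ) : ℝ := (u (Iic x)).toReal

/-- Quantile function (generalized inverse cdf) of a measure on `ℝ`. -/
noncomputable def quantileFn (u : Measure ℝ) (p : ℝ) : ℝ := sInf {x : ℝ | p ≤ cdfFn u x}

open Filter Topology ProbabilityTheory

lemma cdfFn_eq (u : Measure ℝ) [IsProbabilityMeasure u] (x : ℝ) : cdfFn u x = cdf u x :=
  (cdf_eq_real u x).symm

lemma quantile_le_iff {u : Measure ℝ} [IsProbabilityMeasure u] {p : ℝ} (hp : p ∈ Ioo (0:ℝ) 1)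
    (s : ℝ) : quantileFn u p ≤ s ↔ p ≤ cdfFn u s := by
  have hFeq : ∀ x, cdfFn u x = cdf u x := cdfFn_eq u
  have hne : {x : ℝ | p ≤ cdfFn u x}.Nonempty := by
    have h : ∀ᶠ x in atTop, p < cdf u x := (tendsto_cdf_atTop u).eventually (eventually_gt_nhds hp.2)
    obtain ⟨x, hx⟩ := h.exists
    exact ⟨x, by rw [mem_setOf_eq, hFeq]; exact hx.le⟩
  have hbdd : BddBelow {x : ℝ | p ≤ cdfFn u x} := by
    have h : ∀ᶠ x in atBot, cdf u x < p := (tendsto_cdf_atBot u).eventually (eventually_lt_nhds hp.1)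
    obtain ⟨x₀, hx₀⟩ := eventually_atBot.mp h
    refine ⟨x₀, fun x hx => ?_⟩
    by_contra hc
    push_neg at hc
    exact absurd (hx.trans_eq (hFeq x)) (not_le.2 (hx₀ x hc.le))
  constructor
  · intro h
    have key : ∀ x, s < x → p ≤ cdf u x := by
      intro x hx
      obtain ⟨y, hy, hyx⟩ := (csInf_lt_iff hbdd hne).mp (lt_of_le_of_lt h hx)
      exact (hy.trans_eq (hFeq y)).trans (monotone_cdf u hyx.le)
    rw [hFeq]
    have htd : Tendsto (cdf u) (𝓝[>] s) (𝓝 (cdf u s)) :=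
      ((cdf u).right_continuous s).tendsto.mono_left (nhdsWithin_mono s Ioi_subset_Ici_self)
    exact ge_of_tendsto htd (eventually_nhdsWithin_of_forall (fun x hx => key x hx))
  · intro h
    exact csInf_le hbdd h

lemma quantile_monotoneOn {u : Measure ℝ} [IsProbabilityMeasure u] :
    MonotoneOn (quantileFn u) (Ioo (0:ℝ) 1) := by
  intro p hp q hq hpq
  have h1 : q ≤ cdfFn u (quantileFn u q) := (quantile_le_iff hq _).mp le_rfl
  exact (quantile_le_iff hp _).mpr (hpq.trans h1)

lemma quantile_aemeasurable (u : Measure ℝ) [IsProbabilityMeasure u] :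
    AEMeasurable (quantileFn u) (volume.restrict (Ioo (0:ℝ) 1)) :=
  aemeasurable_restrict_of_monotoneOn measurableSet_Ioo quantile_monotoneOn

lemma cdfFn_nonneg (u : Measure ℝ) (x : ℝ) : 0 ≤ cdfFn u x := ENNReal.toReal_nonneg

lemma cdfFn_le_one (u : Measure ℝ) [IsProbabilityMeasure u] (x : ℝ) : cdfFn u x ≤ 1 := by
  rw [cdfFn_eq]; exact cdf_le_one u x

lemma vol_Iic_inter {c : ℝ} (hc0 : 0 ≤ c) (hc1 : c ≤ 1) :
    volume (Iic c ∩ Ioo (0:ℝ) 1) = ENNReal.ofReal c := by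
  apply le_antisymm
  · calc volume (Iic c ∩ Ioo (0:ℝ) 1) ≤ volume (Ioc 0 c) := by
          apply measure_mono; rintro x ⟨h1, h2, h3⟩; exact ⟨h2, h1⟩
      _ = ENNReal.ofReal c := by rw [Real.volume_Ioc, sub_zero]
  · calc ENNReal.ofReal c = volume (Ioo (0:ℝ) c) := by rw [Real.volume_Ioo, sub_zero]
      _ ≤ volume (Iic c ∩ Ioo (0:ℝ) 1) := by
          apply measure_mono; rintro x ⟨h1, h2⟩
          exact ⟨h2.le, h1, h2.trans_le hc1⟩

lemma map_quantile (u : Measure ℝ) [IsProbabilityMeasure u] :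
    Measure.map (quantileFn u) (volume.restrict (Ioo (0:ℝ) 1)) = u := by
  refine Measure.ext_of_Iic _ u (fun a => ?_)
  rw [Measure.map_apply_of_aemeasurable (quantile_aemeasurable u) measurableSet_Iic,
    Measure.restrict_apply' measurableSet_Ioo]
  have hset : quantileFn u ⁻¹' Iic a ∩ Ioo (0:ℝ) 1 = Iic (cdfFn u a) ∩ Ioo (0:ℝ) 1 := by
    ext p
    simp only [mem_inter_iff, mem_preimage, mem_Iic, and_congr_left_iff]
    intro hp
    exact quantile_le_iff hp a
  rw [hset, vol_Iic_inter (cdfFn_nonneg u a) (cdfFn_le_one u a)]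
  exact ENNReal.ofReal_toReal (measure_ne_top u _)

section intervals

lemma up_struct {S : Set ℝ}
    (hS : ∀ p ∈ S ∩ Ioo (0:ℝ) 1, ∀ q ∈ Ioo (0:ℝ) 1, p ≤ q → q ∈ S)
    (hne : (S ∩ Ioo (0:ℝ) 1).Nonempty) :
    0 ≤ sInf (S ∩ Ioo (0:ℝ) 1) ∧ sInf (S ∩ Ioo (0:ℝ) 1) ≤ 1 ∧
      S ∩ Ioo (0:ℝ) 1 ⊆ Ico (sInf (S ∩ Ioo (0:ℝ) 1)) 1 ∧
      Ioo (sInf (S ∩ Ioo (0:ℝ) 1)) 1 ⊆ S ∩ Ioo (0:ℝ) 1 := by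
  have hbdd : BddBelow (S ∩ Ioo (0:ℝ) 1) := ⟨0, fun x hx => hx.2.1.le⟩
  have h0 : 0 ≤ sInf (S ∩ Ioo (0:ℝ) 1) := le_csInf hne (fun x hx => hx.2.1.le)
  obtain ⟨x, hx⟩ := hne
  refine ⟨h0, (csInf_le hbdd hx).trans hx.2.2.le, fun y hy => ⟨csInf_le hbdd hy, hy.2.2⟩, ?_⟩
  intro q hq
  obtain ⟨p, hp, hpq⟩ := (csInf_lt_iff hbdd ⟨x, hx⟩).mp hq.1
  have hqI : q ∈ Ioo (0:ℝ) 1 := ⟨lt_of_le_of_lt (h0.trans (le_refl _)) hq.1, hq.2⟩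
  exact ⟨hS p hp q hqI hpq.le, hqI⟩

lemma down_struct {T : Set ℝ}
    (hT : ∀ p ∈ T ∩ Ioo (0:ℝ) 1, ∀ q ∈ Ioo (0:ℝ) 1, q ≤ p → q ∈ T)
    (hne : (T ∩ Ioo (0:ℝ) 1).Nonempty) :
    0 ≤ sSup (T ∩ Ioo (0:ℝ) 1) ∧ sSup (T ∩ Ioo (0:ℝ) 1) ≤ 1 ∧
      T ∩ Ioo (0:ℝ) 1 ⊆ Ioc 0 (sSup (T ∩ Ioo (0:ℝ) 1)) ∧
      Ioo 0 (sSup (T ∩ Ioo (0:ℝ) 1)) ⊆ T ∩ Ioo (0:ℝ) 1 := by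
  have hbdd : BddAbove (T ∩ Ioo (0:ℝ) 1) := ⟨1, fun x hx => hx.2.2.le⟩
  have h1 : sSup (T ∩ Ioo (0:ℝ) 1) ≤ 1 := csSup_le hne (fun x hx => hx.2.2.le)
  obtain ⟨x, hx⟩ := hne
  refine ⟨hx.2.1.le.trans (le_csSup hbdd hx), h1, fun y hy => ⟨hy.2.1, le_csSup hbdd hy⟩, ?_⟩
  intro q hq
  obtain ⟨p, hp, hpq⟩ := (lt_csSup_iff hbdd ⟨x, hx⟩).mp hq.2
  have hqI : q ∈ Ioo (0:ℝ) 1 := ⟨hq.1, lt_of_lt_of_le hq.2 h1⟩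
  exact ⟨hT p hp q hqI hpq.le, hqI⟩

lemma inter_up_up {S S' : Set ℝ}
    (hS : ∀ p ∈ S ∩ Ioo (0:ℝ) 1, ∀ q ∈ Ioo (0:ℝ) 1, p ≤ q → q ∈ S)
    (hS' : ∀ p ∈ S' ∩ Ioo (0:ℝ) 1, ∀ q ∈ Ioo (0:ℝ) 1, p ≤ q → q ∈ S') :
    min (volume (S ∩ Ioo (0:ℝ) 1)) (volume (S' ∩ Ioo (0:ℝ) 1))
      ≤ volume (S ∩ S' ∩ Ioo (0:ℝ) 1) := by
  rcases (S ∩ Ioo (0:ℝ) 1).eq_empty_or_nonempty with h | h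
  · rw [h]; simp
  rcases (S' ∩ Ioo (0:ℝ) 1).eq_empty_or_nonempty with h' | h'
  · rw [h']; simp
  obtain ⟨h0, h1, hsub, hsup⟩ := up_struct hS h
  obtain ⟨h0', h1', hsub', hsup'⟩ := up_struct hS' h'
  set σ := sInf (S ∩ Ioo (0:ℝ) 1)
  set σ' := sInf (S' ∩ Ioo (0:ℝ) 1)
  have key : ENNReal.ofReal (1 - max σ σ') ≤ volume (S ∩ S' ∩ Ioo (0:ℝ) 1) := by
    calc ENNReal.ofReal (1 - max σ σ') = volume (Ioo (max σ σ') 1) := by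
          rw [Real.volume_Ioo]
      _ ≤ _ := by
          apply measure_mono
          intro q hq
          have h1q := hsup ⟨(le_max_left σ σ').trans_lt hq.1, hq.2⟩
          have h2q := hsup' ⟨(le_max_right σ σ').trans_lt hq.1, hq.2⟩
          exact ⟨⟨h1q.1, h2q.1⟩, h1q.2⟩
  rcases le_total σ σ' with hσ | hσ
  · refine le_trans (min_le_right _ _) (le_trans ?_ key)
    rw [max_eq_right hσ]
    calc volume (S' ∩ Ioo (0:ℝ) 1) ≤ volume (Ico σ' 1) := measure_mono hsub'
      _ = ENNReal.ofReal (1 - σ') := by rw [Real.volume_Ico]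
  · refine le_trans (min_le_left _ _) (le_trans ?_ key)
    rw [max_eq_left hσ]
    calc volume (S ∩ Ioo (0:ℝ) 1) ≤ volume (Ico σ 1) := measure_mono hsub
      _ = ENNReal.ofReal (1 - σ) := by rw [Real.volume_Ico]

lemma inter_down_down {S S' : Set ℝ}
    (hS : ∀ p ∈ S ∩ Ioo (0:ℝ) 1, ∀ q ∈ Ioo (0:ℝ) 1, q ≤ p → q ∈ S)
    (hS' : ∀ p ∈ S' ∩ Ioo (0:ℝ) 1, ∀ q ∈ Ioo (0:ℝ) 1, q ≤ p → q ∈ S') :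
    min (volume (S ∩ Ioo (0:ℝ) 1)) (volume (S' ∩ Ioo (0:ℝ) 1))
      ≤ volume (S ∩ S' ∩ Ioo (0:ℝ) 1) := by
  rcases (S ∩ Ioo (0:ℝ) 1).eq_empty_or_nonempty with h | h
  · rw [h]; simp
  rcases (S' ∩ Ioo (0:ℝ) 1).eq_empty_or_nonempty with h' | h'
  · rw [h']; simp
  obtain ⟨h0, h1, hsub, hsup⟩ := down_struct hS h
  obtain ⟨h0', h1', hsub', hsup'⟩ := down_struct hS' h'
  set τ := sSup (S ∩ Ioo (0:ℝ) 1)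
  set τ' := sSup (S' ∩ Ioo (0:ℝ) 1)
  have key : ENNReal.ofReal (min τ τ') ≤ volume (S ∩ S' ∩ Ioo (0:ℝ) 1) := by
    calc ENNReal.ofReal (min τ τ') = volume (Ioo 0 (min τ τ')) := by
          rw [Real.volume_Ioo, sub_zero]
      _ ≤ _ := by
          apply measure_mono
          intro q hq
          have h1q := hsup ⟨hq.1, hq.2.trans_le (min_le_left _ _)⟩
          have h2q := hsup' ⟨hq.1, hq.2.trans_le (min_le_right _ _)⟩
          exact ⟨⟨h1q.1, h2q.1⟩, h1q.2⟩
  rcases le_total τ τ' with hτ | hτ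
  · refine le_trans (min_le_left _ _) (le_trans ?_ key)
    rw [min_eq_left hτ]
    calc volume (S ∩ Ioo (0:ℝ) 1) ≤ volume (Ioc 0 τ) := measure_mono hsub
      _ = ENNReal.ofReal τ := by rw [Real.volume_Ioc, sub_zero]
  · refine le_trans (min_le_right _ _) (le_trans ?_ key)
    rw [min_eq_right hτ]
    calc volume (S' ∩ Ioo (0:ℝ) 1) ≤ volume (Ioc 0 τ') := measure_mono hsub'
      _ = ENNReal.ofReal τ' := by rw [Real.volume_Ioc, sub_zero]

lemma inter_up_down {S T : Set ℝ}
    (hS : ∀ p ∈ S ∩ Ioo (0:ℝ) 1, ∀ q ∈ Ioo (0:ℝ) 1, p ≤ q → q ∈ S)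
    (hT : ∀ p ∈ T ∩ Ioo (0:ℝ) 1, ∀ q ∈ Ioo (0:ℝ) 1, q ≤ p → q ∈ T) :
    volume (S ∩ T ∩ Ioo (0:ℝ) 1)
      ≤ volume (S ∩ Ioo (0:ℝ) 1) + volume (T ∩ Ioo (0:ℝ) 1) - 1 := by
  rcases (S ∩ Ioo (0:ℝ) 1).eq_empty_or_nonempty with h | h
  · have : S ∩ T ∩ Ioo (0:ℝ) 1 = ∅ := by
      rw [← subset_empty_iff, ← h]; intro x hx; exact ⟨hx.1.1, hx.2⟩
    rw [this]; simp
  rcases (T ∩ Ioo (0:ℝ) 1).eq_empty_or_nonempty with h' | h'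
  · have : S ∩ T ∩ Ioo (0:ℝ) 1 = ∅ := by
      rw [← subset_empty_iff, ← h']; intro x hx; exact ⟨hx.1.2, hx.2⟩
    rw [this]; simp
  obtain ⟨h0, h1, hsub, hsup⟩ := up_struct hS h
  obtain ⟨h0', h1', hsub', hsup'⟩ := down_struct hT h'
  set σ := sInf (S ∩ Ioo (0:ℝ) 1)
  set τ := sSup (T ∩ Ioo (0:ℝ) 1)
  have hvolS : volume (S ∩ Ioo (0:ℝ) 1) = ENNReal.ofReal (1 - σ) := by
    apply le_antisymm
    · calc volume (S ∩ Ioo (0:ℝ) 1) ≤ volume (Ico σ 1) := measure_mono hsub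
        _ = ENNReal.ofReal (1 - σ) := by rw [Real.volume_Ico]
    · calc ENNReal.ofReal (1 - σ) = volume (Ioo σ 1) := by rw [Real.volume_Ioo]
        _ ≤ _ := measure_mono hsup
  have hvolT : volume (T ∩ Ioo (0:ℝ) 1) = ENNReal.ofReal τ := by
    apply le_antisymm
    · calc volume (T ∩ Ioo (0:ℝ) 1) ≤ volume (Ioc 0 τ) := measure_mono hsub'
        _ = ENNReal.ofReal τ := by rw [Real.volume_Ioc, sub_zero]
    · calc ENNReal.ofReal τ = volume (Ioo 0 τ) := by rw [Real.volume_Ioo, sub_zero]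
        _ ≤ _ := measure_mono hsup'
  have hST : volume (S ∩ T ∩ Ioo (0:ℝ) 1) ≤ ENNReal.ofReal (τ - σ) := by
    calc volume (S ∩ T ∩ Ioo (0:ℝ) 1) ≤ volume (Icc σ τ) := by
          apply measure_mono
          intro x hx
          exact ⟨csInf_le ⟨0, fun y hy => hy.2.1.le⟩ ⟨hx.1.1, hx.2⟩,
            le_csSup ⟨1, fun y hy => hy.2.2.le⟩ ⟨hx.1.2, hx.2⟩⟩
      _ = ENNReal.ofReal (τ - σ) := by rw [Real.volume_Icc]
  rw [hvolS, hvolT, ← ENNReal.ofReal_add (by linarith) h0', ← ENNReal.ofReal_one,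
    ← ENNReal.ofReal_sub _ (by norm_num : (0:ℝ) ≤ 1)]
  refine hST.trans (ENNReal.ofReal_le_ofReal (by linarith))

end intervals

lemma ofReal_max (x : ℝ) : ENNReal.ofReal (max x 0) = ENNReal.ofReal x := by
  rcases le_total x 0 with h | h
  · rw [max_eq_right h, ENNReal.ofReal_zero, ENNReal.ofReal_of_nonpos h]
  · rw [max_eq_left h]

lemma tail_formula (π : Measure (ℝ × ℝ)) [IsFiniteMeasure π] {f g : ℝ → ℝ}
    (hf : Measurable f) (hg : Measurable g) :
    ∫⁻ q, ENNReal.ofReal (f q.1) * ENNReal.ofReal (g q.2) ∂π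
      = ∫⁻ s in Ioi (0:ℝ), ∫⁻ t in Ioi (0:ℝ), π {q | s < f q.1 ∧ t < g q.2} := by
  have step1 : ∀ q : ℝ × ℝ, ENNReal.ofReal (f q.1) * ENNReal.ofReal (g q.2)
      = ∫⁻ s in Ioi (0:ℝ), (Iio (f q.1)).indicator (fun _ => ENNReal.ofReal (g q.2)) s := by
    intro q
    rw [lintegral_indicator_const measurableSet_Iio, Measure.restrict_apply measurableSet_Iio]
    have : Iio (f q.1) ∩ Ioi 0 = Ioo 0 (f q.1) := by ext x; simp [mem_Ioo, and_comm]
    rw [this, Real.volume_Ioo, sub_zero, mul_comm]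
  calc ∫⁻ q, ENNReal.ofReal (f q.1) * ENNReal.ofReal (g q.2) ∂π
      = ∫⁻ q, (∫⁻ s in Ioi (0:ℝ), (Iio (f q.1)).indicator (fun _ => ENNReal.ofReal (g q.2)) s) ∂π := by
        exact lintegral_congr step1
    _ = ∫⁻ s in Ioi (0:ℝ), (∫⁻ q, (Iio (f q.1)).indicator (fun _ => ENNReal.ofReal (g q.2)) s ∂π) := by
        apply lintegral_lintegral_swap
        have : (Function.uncurry fun (q : ℝ × ℝ) (s : ℝ) =>
            (Iio (f q.1)).indicator (fun _ => ENNReal.ofReal (g q.2)) s)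
            = fun x : (ℝ × ℝ) × ℝ => if x.2 < f x.1.1 then ENNReal.ofReal (g x.1.2) else 0 := by
          funext x
          simp [Function.uncurry, Set.indicator_apply]
        rw [this]
        exact (Measurable.ite (measurableSet_lt measurable_snd (hf.comp measurable_fst.fst))
          ((hg.comp measurable_fst.snd).ennreal_ofReal) measurable_const).aemeasurable
    _ = ∫⁻ s in Ioi (0:ℝ), ∫⁻ t in Ioi (0:ℝ), π {q | s < f q.1 ∧ t < g q.2} := by
        refine setLIntegral_congr_fun measurableSet_Ioi ?_
        intro s hs
        beta_reduce
        have hAs : MeasurableSet {q : ℝ × ℝ | s < f q.1} :=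
          measurableSet_lt measurable_const (hf.comp measurable_fst)
        have e1 : ∫⁻ q, (Iio (f q.1)).indicator (fun _ => ENNReal.ofReal (g q.2)) s ∂π
            = ∫⁻ q in {q : ℝ × ℝ | s < f q.1}, ENNReal.ofReal (g q.2) ∂π := by
          rw [← lintegral_indicator hAs]
          apply lintegral_congr
          intro q
          simp [Set.indicator_apply, mem_Iio, mem_setOf_eq]
        rw [e1]
        have e2 : ∫⁻ q in {q : ℝ × ℝ | s < f q.1}, ENNReal.ofReal (g q.2) ∂π
            = ∫⁻ q in {q : ℝ × ℝ | s < f q.1}, ENNReal.ofReal (max (g q.2) 0) ∂π := by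
          apply lintegral_congr
          intro q
          rw [ofReal_max]
        have hmax : Measurable fun q : ℝ × ℝ => max (g q.2) 0 :=
          (hg.comp measurable_snd : Measurable fun q : ℝ × ℝ => g q.2).max measurable_const
        have e3 : ∫⁻ q in {q : ℝ × ℝ | s < f q.1}, ENNReal.ofReal (max (g q.2) 0) ∂π
            = ∫⁻ t in Ioi (0:ℝ), π.restrict {q : ℝ × ℝ | s < f q.1} {q | t < max (g q.2) 0} :=
          lintegral_eq_lintegral_meas_lt _ (Filter.Eventually.of_forall
            (fun q => le_max_right _ _)) hmax.aemeasurable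
        rw [e2, e3]
        refine setLIntegral_congr_fun measurableSet_Ioi ?_
        intro t ht
        beta_reduce
        rw [Measure.restrict_apply' hAs]
        congr 1
        ext q
        simp only [mem_setOf_eq, mem_inter_iff]
        constructor
        · rintro ⟨h1, h2⟩
          exact ⟨h2, (lt_max_iff.mp h1).resolve_right (not_lt.mpr ht.le)⟩
        · rintro ⟨h1, h2⟩
          exact ⟨lt_max_iff.mpr (Or.inl h2), h1⟩

lemma hmul2 (a b : ℝ) (ha : 0 ≤ a) :
    (2 : ENNReal) * (ENNReal.ofReal a * ENNReal.ofReal b) = ENNReal.ofReal (2 * (a * b)) := by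
  have h2 : (2 : ENNReal) = ENNReal.ofReal 2 := by norm_num
  rw [← ENNReal.ofReal_mul ha, h2, ← ENNReal.ofReal_mul (by norm_num : (0:ℝ) ≤ 2)]

lemma key_alg (x y : ℝ) :
    ENNReal.ofReal ((x - y) ^ 2) + (2 * (ENNReal.ofReal x * ENNReal.ofReal y)
        + 2 * (ENNReal.ofReal (-x) * ENNReal.ofReal (-y)))
      = (ENNReal.ofReal (x ^ 2) + ENNReal.ofReal (y ^ 2))
        + (2 * (ENNReal.ofReal x * ENNReal.ofReal (-y))
          + 2 * (ENNReal.ofReal (-x) * ENNReal.ofReal y)) := by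
  rcases le_total x 0 with hx | hx <;> rcases le_total y 0 with hy | hy
  · rw [ENNReal.ofReal_of_nonpos hx, ENNReal.ofReal_of_nonpos hy]
    simp only [zero_mul, mul_zero, add_zero, zero_add]
    rw [hmul2 _ _ (neg_nonneg.mpr hx), ← ENNReal.ofReal_add (sq_nonneg _) (by nlinarith),
      ← ENNReal.ofReal_add (sq_nonneg _) (sq_nonneg _)]
    congr 1; ring
  · rw [ENNReal.ofReal_of_nonpos hx, ENNReal.ofReal_of_nonpos (neg_nonpos.mpr hy)]
    simp only [zero_mul, mul_zero, add_zero, zero_add]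
    rw [hmul2 _ _ (neg_nonneg.mpr hx), ← ENNReal.ofReal_add (sq_nonneg _) (sq_nonneg _),
      ← ENNReal.ofReal_add (by positivity) (by nlinarith)]
    congr 1; ring
  · rw [ENNReal.ofReal_of_nonpos hy, ENNReal.ofReal_of_nonpos (neg_nonpos.mpr hx)]
    simp only [zero_mul, mul_zero, add_zero, zero_add]
    rw [hmul2 _ _ hx, ← ENNReal.ofReal_add (sq_nonneg _) (sq_nonneg _),
      ← ENNReal.ofReal_add (by positivity) (by nlinarith)]
    congr 1; ring
  · rw [ENNReal.ofReal_of_nonpos (neg_nonpos.mpr hx), ENNReal.ofReal_of_nonpos (neg_nonpos.mpr hy)]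
    simp only [zero_mul, mul_zero, add_zero, zero_add]
    rw [hmul2 _ _ hx, ← ENNReal.ofReal_add (sq_nonneg _) (by nlinarith),
      ← ENNReal.ofReal_add (sq_nonneg _) (sq_nonneg _)]
    congr 1; ring

lemma split_identity (m : Measure (ℝ × ℝ)) [IsProbabilityMeasure m] :
    ∫⁻ q, ENNReal.ofReal ((q.1 - q.2) ^ 2) ∂m
      + (2 * ∫⁻ q, ENNReal.ofReal q.1 * ENNReal.ofReal q.2 ∂m
        + 2 * ∫⁻ q, ENNReal.ofReal (-q.1) * ENNReal.ofReal (-q.2) ∂m)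
    = (∫⁻ q, ENNReal.ofReal (q.1 ^ 2) ∂m + ∫⁻ q, ENNReal.ofReal (q.2 ^ 2) ∂m)
      + (2 * ∫⁻ q, ENNReal.ofReal q.1 * ENNReal.ofReal (-q.2) ∂m
        + 2 * ∫⁻ q, ENNReal.ofReal (-q.1) * ENNReal.ofReal q.2 ∂m) := by
  have mA : Measurable fun q : ℝ × ℝ => ENNReal.ofReal q.1 * ENNReal.ofReal q.2 :=
    measurable_fst.ennreal_ofReal.mul measurable_snd.ennreal_ofReal
  have mB : Measurable fun q : ℝ × ℝ => ENNReal.ofReal q.1 * ENNReal.ofReal (-q.2) :=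
    measurable_fst.ennreal_ofReal.mul measurable_snd.neg.ennreal_ofReal
  have mC : Measurable fun q : ℝ × ℝ => ENNReal.ofReal (-q.1) * ENNReal.ofReal q.2 :=
    measurable_fst.neg.ennreal_ofReal.mul measurable_snd.ennreal_ofReal
  have mD : Measurable fun q : ℝ × ℝ => ENNReal.ofReal (-q.1) * ENNReal.ofReal (-q.2) :=
    measurable_fst.neg.ennreal_ofReal.mul measurable_snd.neg.ennreal_ofReal
  have mcost : Measurable fun q : ℝ × ℝ => ENNReal.ofReal ((q.1 - q.2) ^ 2) :=
    ((measurable_fst.sub measurable_snd).pow_const 2).ennreal_ofReal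
  have msq1 : Measurable fun q : ℝ × ℝ => ENNReal.ofReal (q.1 ^ 2) :=
    (measurable_fst.pow_const 2).ennreal_ofReal
  rw [← lintegral_const_mul 2 mA, ← lintegral_const_mul 2 mD, ← lintegral_const_mul 2 mB,
    ← lintegral_const_mul 2 mC, ← lintegral_add_left (mA.const_mul 2),
    ← lintegral_add_left mcost, ← lintegral_add_left (mB.const_mul 2),
    ← lintegral_add_left msq1, ← lintegral_add_left (f := fun q : ℝ × ℝ => ENNReal.ofReal (q.1 ^ 2) + ENNReal.ofReal (q.2 ^ 2))
      (msq1.add (measurable_snd.pow_const 2).ennreal_ofReal)]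
  · exact lintegral_congr fun q => key_alg q.1 q.2

lemma vol_up (u : Measure ℝ) [IsProbabilityMeasure u] (s : ℝ) :
    volume ({p : ℝ | s < quantileFn u p} ∩ Ioo (0:ℝ) 1) = u (Ioi s) := by
  rw [← Measure.restrict_apply' measurableSet_Ioo,
    show {p : ℝ | s < quantileFn u p} = quantileFn u ⁻¹' (Ioi s) from rfl,
    ← Measure.map_apply_of_aemeasurable (quantile_aemeasurable u) measurableSet_Ioi,
    map_quantile u]

lemma vol_down (u : Measure ℝ) [IsProbabilityMeasure u] (c : ℝ) :
    volume ({p : ℝ | quantileFn u p < c} ∩ Ioo (0:ℝ) 1) = u (Iio c) := by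
  rw [← Measure.restrict_apply' measurableSet_Ioo,
    show {p : ℝ | quantileFn u p < c} = quantileFn u ⁻¹' (Iio c) from rfl,
    ← Measure.map_apply_of_aemeasurable (quantile_aemeasurable u) measurableSet_Iio,
    map_quantile u]

lemma up_closed_quantile (u : Measure ℝ) [IsProbabilityMeasure u] (s : ℝ) :
    ∀ p ∈ {p : ℝ | s < quantileFn u p} ∩ Ioo (0:ℝ) 1, ∀ q ∈ Ioo (0:ℝ) 1, p ≤ q →
      q ∈ {p : ℝ | s < quantileFn u p} :=
  fun p hp q hq hpq => lt_of_lt_of_le hp.1 (quantile_monotoneOn hp.2 hq hpq)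

lemma down_closed_quantile (u : Measure ℝ) [IsProbabilityMeasure u] (c : ℝ) :
    ∀ p ∈ {p : ℝ | quantileFn u p < c} ∩ Ioo (0:ℝ) 1, ∀ q ∈ Ioo (0:ℝ) 1, q ≤ p →
      q ∈ {p : ℝ | quantileFn u p < c} :=
  fun p hp q hq hqp => lt_of_le_of_lt (quantile_monotoneOn hq hp.2 hqp) hp.1

lemma mul_le_sq_add_sq (a b : ℝ) :
    ENNReal.ofReal a * ENNReal.ofReal b ≤ ENNReal.ofReal (a ^ 2) + ENNReal.ofReal (b ^ 2) := by
  rcases le_total a 0 with ha | ha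
  · rw [ENNReal.ofReal_of_nonpos ha, zero_mul]; exact zero_le
  rcases le_total b 0 with hb | hb
  · rw [ENNReal.ofReal_of_nonpos hb, mul_zero]; exact zero_le
  rcases le_total a b with hab | hab
  · calc ENNReal.ofReal a * ENNReal.ofReal b ≤ ENNReal.ofReal b * ENNReal.ofReal b :=
          mul_le_mul_left (ENNReal.ofReal_le_ofReal hab) _
      _ = ENNReal.ofReal (b ^ 2) := by rw [← ENNReal.ofReal_mul hb, ← sq]
      _ ≤ _ := le_add_self
  · calc ENNReal.ofReal a * ENNReal.ofReal b ≤ ENNReal.ofReal a * ENNReal.ofReal a :=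
          mul_le_mul_right (ENNReal.ofReal_le_ofReal hab) _
      _ = ENNReal.ofReal (a ^ 2) := by rw [← ENNReal.ofReal_mul ha, ← sq]
      _ ≤ _ := le_add_right le_rfl

/-- The monotone coupling `π* = (G_u, G_v)_# Unif(0,1)` is a coupling of `u` and `v`,
its quadratic transport cost equals `∫_0^1 (G_u(p) - G_v(p))² dp`, and this cost is
minimal among all couplings of `u` and `v`; in particular the Kantorovich infimum with
quadratic cost is attained. -/
theorem monotone_coupling_optimal
    (u v : Measure ℝ) [IsProbabilityMeasure u] [IsProbabilityMeasure v]
    (hu : Integrable (fun x => x ^ 2) u) (hv : Integrable (fun x => x ^ 2) v) :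
    (Measure.map (fun p => (quantileFn u p, quantileFn v p))
        (volume.restrict (Ioo (0:ℝ) 1))).map Prod.fst = u ∧
    (Measure.map (fun p => (quantileFn u p, quantileFn v p))
        (volume.restrict (Ioo (0:ℝ) 1))).map Prod.snd = v ∧
    (∫⁻ q, ENNReal.ofReal ((q.1 - q.2) ^ 2)
        ∂(Measure.map (fun p => (quantileFn u p, quantileFn v p))
          (volume.restrict (Ioo (0:ℝ) 1))))
      = ∫⁻ p in Ioo (0:ℝ) 1, ENNReal.ofReal ((quantileFn u p - quantileFn v p) ^ 2) ∧
    ∀ π : Measure (ℝ × ℝ), IsProbabilityMeasure π →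
      π.map Prod.fst = u → π.map Prod.snd = v →
      (∫⁻ q, ENNReal.ofReal ((q.1 - q.2) ^ 2)
          ∂(Measure.map (fun p => (quantileFn u p, quantileFn v p))
            (volume.restrict (Ioo (0:ℝ) 1))))
        ≤ ∫⁻ q, ENNReal.ofReal ((q.1 - q.2) ^ 2) ∂π := by
  haveI hρ : IsProbabilityMeasure (volume.restrict (Ioo (0:ℝ) 1)) := by
    constructor
    rw [Measure.restrict_apply_univ, Real.volume_Ioo]
    norm_num
  have hpair : AEMeasurable (fun p => (quantileFn u p, quantileFn v p))
      (volume.restrict (Ioo (0:ℝ) 1)) :=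
    (quantile_aemeasurable u).prodMk (quantile_aemeasurable v)
  haveI hπs : IsProbabilityMeasure (Measure.map (fun p => (quantileFn u p, quantileFn v p))
      (volume.restrict (Ioo (0:ℝ) 1))) := Measure.isProbabilityMeasure_map hpair
  have mcost : Measurable fun q : ℝ × ℝ => ENNReal.ofReal ((q.1 - q.2) ^ 2) :=
    ((measurable_fst.sub measurable_snd).pow_const 2).ennreal_ofReal
  have hfst : (Measure.map (fun p => (quantileFn u p, quantileFn v p))
      (volume.restrict (Ioo (0:ℝ) 1))).map Prod.fst = u := by
    rw [AEMeasurable.map_map_of_aemeasurable measurable_fst.aemeasurable hpair]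
    exact map_quantile u
  have hsnd : (Measure.map (fun p => (quantileFn u p, quantileFn v p))
      (volume.restrict (Ioo (0:ℝ) 1))).map Prod.snd = v := by
    rw [AEMeasurable.map_map_of_aemeasurable measurable_snd.aemeasurable hpair]
    exact map_quantile v
  refine ⟨hfst, hsnd, lintegral_map' mcost.aemeasurable hpair, ?_⟩
  intro π hπprob h1 h2
  haveI := hπprob
  -- abbreviations
  set πs := Measure.map (fun p => (quantileFn u p, quantileFn v p))
    (volume.restrict (Ioo (0:ℝ) 1)) with hπsdef
  -- measure computations for πs
  have hπs_apply : ∀ S : Set (ℝ × ℝ), MeasurableSet S →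
      πs S = volume ((fun p => (quantileFn u p, quantileFn v p)) ⁻¹' S ∩ Ioo (0:ℝ) 1) := by
    intro S hS
    rw [hπsdef, Measure.map_apply_of_aemeasurable hpair hS,
      Measure.restrict_apply' measurableSet_Ioo]
  -- marginal computations for π
  have hπ_fst : ∀ s : ℝ, π {q : ℝ × ℝ | s < q.1} = u (Ioi s) := by
    intro s
    rw [← h1, Measure.map_apply measurable_fst measurableSet_Ioi]
    rfl
  have hπ_snd : ∀ t : ℝ, π {q : ℝ × ℝ | t < q.2} = v (Ioi t) := by
    intro t
    rw [← h2, Measure.map_apply measurable_snd measurableSet_Ioi]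
    rfl
  have hπ_fst' : ∀ c : ℝ, π {q : ℝ × ℝ | q.1 < c} = u (Iio c) := by
    intro c
    rw [← h1, Measure.map_apply measurable_fst measurableSet_Iio]
    rfl
  have hπ_snd' : ∀ c : ℝ, π {q : ℝ × ℝ | q.2 < c} = v (Iio c) := by
    intro c
    rw [← h2, Measure.map_apply measurable_snd measurableSet_Iio]
    rfl
  -- comparison A : both coordinates "up"
  have cmpA : (∫⁻ q, ENNReal.ofReal q.1 * ENNReal.ofReal q.2 ∂π)
      ≤ ∫⁻ q, ENNReal.ofReal q.1 * ENNReal.ofReal q.2 ∂πs := by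
    have e1 : (∫⁻ q, ENNReal.ofReal q.1 * ENNReal.ofReal q.2 ∂π)
        = ∫⁻ s in Ioi (0:ℝ), ∫⁻ t in Ioi (0:ℝ), π {q | s < q.1 ∧ t < q.2} :=
      tail_formula π measurable_id measurable_id
    have e2 : (∫⁻ q, ENNReal.ofReal q.1 * ENNReal.ofReal q.2 ∂πs)
        = ∫⁻ s in Ioi (0:ℝ), ∫⁻ t in Ioi (0:ℝ), πs {q | s < q.1 ∧ t < q.2} :=
      tail_formula πs measurable_id measurable_id
    rw [e1, e2]
    refine lintegral_mono fun s => lintegral_mono fun t => ?_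
    have hSmeas : MeasurableSet {q : ℝ × ℝ | s < q.1 ∧ t < q.2} :=
      (measurableSet_lt measurable_const measurable_fst).inter
        (measurableSet_lt measurable_const measurable_snd)
    have hval : πs {q : ℝ × ℝ | s < q.1 ∧ t < q.2}
        = volume ({p : ℝ | s < quantileFn u p} ∩ {p : ℝ | t < quantileFn v p} ∩ Ioo (0:ℝ) 1) :=
      hπs_apply _ hSmeas
    rw [hval]
    calc π {q : ℝ × ℝ | s < q.1 ∧ t < q.2}
        ≤ min (u (Ioi s)) (v (Ioi t)) := by
          refine le_min ?_ ?_
          · rw [← hπ_fst s]; exact measure_mono fun q hq => hq.1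
          · rw [← hπ_snd t]; exact measure_mono fun q hq => hq.2
      _ = min (volume ({p : ℝ | s < quantileFn u p} ∩ Ioo (0:ℝ) 1))
            (volume ({p : ℝ | t < quantileFn v p} ∩ Ioo (0:ℝ) 1)) := by
          rw [vol_up u s, vol_up v t]
      _ ≤ _ := inter_up_up (up_closed_quantile u s) (up_closed_quantile v t)
  -- comparison D : both coordinates "down"
  have cmpD : (∫⁻ q, ENNReal.ofReal (-q.1) * ENNReal.ofReal (-q.2) ∂π)
      ≤ ∫⁻ q, ENNReal.ofReal (-q.1) * ENNReal.ofReal (-q.2) ∂πs := by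
    have e1 : (∫⁻ q, ENNReal.ofReal (-q.1) * ENNReal.ofReal (-q.2) ∂π)
        = ∫⁻ s in Ioi (0:ℝ), ∫⁻ t in Ioi (0:ℝ), π {q | s < -q.1 ∧ t < -q.2} :=
      tail_formula π measurable_neg measurable_neg
    have e2 : (∫⁻ q, ENNReal.ofReal (-q.1) * ENNReal.ofReal (-q.2) ∂πs)
        = ∫⁻ s in Ioi (0:ℝ), ∫⁻ t in Ioi (0:ℝ), πs {q | s < -q.1 ∧ t < -q.2} :=
      tail_formula πs measurable_neg measurable_neg
    rw [e1, e2]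
    refine lintegral_mono fun s => lintegral_mono fun t => ?_
    have hsets : {q : ℝ × ℝ | s < -q.1 ∧ t < -q.2} = {q : ℝ × ℝ | q.1 < -s ∧ q.2 < -t} := by
      ext q; simp only [mem_setOf_eq, lt_neg]
    rw [hsets]
    have hSmeas : MeasurableSet {q : ℝ × ℝ | q.1 < -s ∧ q.2 < -t} :=
      (measurableSet_lt measurable_fst measurable_const).inter
        (measurableSet_lt measurable_snd measurable_const)
    have hval : πs {q : ℝ × ℝ | q.1 < -s ∧ q.2 < -t}
        = volume ({p : ℝ | quantileFn u p < -s} ∩ {p : ℝ | quantileFn v p < -t}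
            ∩ Ioo (0:ℝ) 1) := hπs_apply _ hSmeas
    rw [hval]
    calc π {q : ℝ × ℝ | q.1 < -s ∧ q.2 < -t}
        ≤ min (u (Iio (-s))) (v (Iio (-t))) := by
          refine le_min ?_ ?_
          · rw [← hπ_fst' (-s)]; exact measure_mono fun q hq => hq.1
          · rw [← hπ_snd' (-t)]; exact measure_mono fun q hq => hq.2
      _ = min (volume ({p : ℝ | quantileFn u p < -s} ∩ Ioo (0:ℝ) 1))
            (volume ({p : ℝ | quantileFn v p < -t} ∩ Ioo (0:ℝ) 1)) := by
          rw [vol_down u (-s), vol_down v (-t)]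
      _ ≤ _ := inter_down_down (down_closed_quantile u (-s)) (down_closed_quantile v (-t))
  -- comparison B : first "up", second "down"
  have cmpB : (∫⁻ q, ENNReal.ofReal q.1 * ENNReal.ofReal (-q.2) ∂πs)
      ≤ ∫⁻ q, ENNReal.ofReal q.1 * ENNReal.ofReal (-q.2) ∂π := by
    have e1 : (∫⁻ q, ENNReal.ofReal q.1 * ENNReal.ofReal (-q.2) ∂π)
        = ∫⁻ s in Ioi (0:ℝ), ∫⁻ t in Ioi (0:ℝ), π {q | s < q.1 ∧ t < -q.2} :=
      tail_formula π measurable_id measurable_neg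
    have e2 : (∫⁻ q, ENNReal.ofReal q.1 * ENNReal.ofReal (-q.2) ∂πs)
        = ∫⁻ s in Ioi (0:ℝ), ∫⁻ t in Ioi (0:ℝ), πs {q | s < q.1 ∧ t < -q.2} :=
      tail_formula πs measurable_id measurable_neg
    rw [e1, e2]
    refine lintegral_mono fun s => lintegral_mono fun t => ?_
    have hsets : {q : ℝ × ℝ | s < q.1 ∧ t < -q.2} = {q : ℝ × ℝ | s < q.1 ∧ q.2 < -t} := by
      ext q; simp only [mem_setOf_eq, lt_neg]
    rw [hsets]
    have hSmeas : MeasurableSet {q : ℝ × ℝ | s < q.1 ∧ q.2 < -t} :=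
      (measurableSet_lt measurable_const measurable_fst).inter
        (measurableSet_lt measurable_snd measurable_const)
    have hval : πs {q : ℝ × ℝ | s < q.1 ∧ q.2 < -t}
        = volume ({p : ℝ | s < quantileFn u p} ∩ {p : ℝ | quantileFn v p < -t}
            ∩ Ioo (0:ℝ) 1) := hπs_apply _ hSmeas
    rw [hval]
    calc volume ({p : ℝ | s < quantileFn u p} ∩ {p : ℝ | quantileFn v p < -t} ∩ Ioo (0:ℝ) 1)
        ≤ volume ({p : ℝ | s < quantileFn u p} ∩ Ioo (0:ℝ) 1)
            + volume ({p : ℝ | quantileFn v p < -t} ∩ Ioo (0:ℝ) 1) - 1 :=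
          inter_up_down (up_closed_quantile u s) (down_closed_quantile v (-t))
      _ = u (Ioi s) + v (Iio (-t)) - 1 := by rw [vol_up u s, vol_down v (-t)]
      _ ≤ π {q : ℝ × ℝ | s < q.1 ∧ q.2 < -t} := by
          rw [tsub_le_iff_right]
          have hB : MeasurableSet {q : ℝ × ℝ | q.2 < -t} :=
            measurableSet_lt measurable_snd measurable_const
          have key := measure_union_add_inter (μ := π) {q : ℝ × ℝ | s < q.1} hB
          have hinter : {q : ℝ × ℝ | s < q.1} ∩ {q : ℝ × ℝ | q.2 < -t}
              = {q : ℝ × ℝ | s < q.1 ∧ q.2 < -t} := rfl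
          calc u (Ioi s) + v (Iio (-t))
              = π {q : ℝ × ℝ | s < q.1} + π {q : ℝ × ℝ | q.2 < -t} := by
                rw [hπ_fst s, hπ_snd' (-t)]
            _ = π ({q : ℝ × ℝ | s < q.1} ∪ {q : ℝ × ℝ | q.2 < -t})
                + π {q : ℝ × ℝ | s < q.1 ∧ q.2 < -t} := by rw [← key, hinter]
            _ ≤ π {q : ℝ × ℝ | s < q.1 ∧ q.2 < -t} + 1 := by
                rw [add_comm]
                exact add_le_add_right prob_le_one _
  -- comparison C : first "down", second "up"
  have cmpC : (∫⁻ q, ENNReal.ofReal (-q.1) * ENNReal.ofReal q.2 ∂πs)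
      ≤ ∫⁻ q, ENNReal.ofReal (-q.1) * ENNReal.ofReal q.2 ∂π := by
    have e1 : (∫⁻ q, ENNReal.ofReal (-q.1) * ENNReal.ofReal q.2 ∂π)
        = ∫⁻ s in Ioi (0:ℝ), ∫⁻ t in Ioi (0:ℝ), π {q | s < -q.1 ∧ t < q.2} :=
      tail_formula π measurable_neg measurable_id
    have e2 : (∫⁻ q, ENNReal.ofReal (-q.1) * ENNReal.ofReal q.2 ∂πs)
        = ∫⁻ s in Ioi (0:ℝ), ∫⁻ t in Ioi (0:ℝ), πs {q | s < -q.1 ∧ t < q.2} :=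
      tail_formula πs measurable_neg measurable_id
    rw [e1, e2]
    refine lintegral_mono fun s => lintegral_mono fun t => ?_
    have hsets : {q : ℝ × ℝ | s < -q.1 ∧ t < q.2} = {q : ℝ × ℝ | q.1 < -s ∧ t < q.2} := by
      ext q; simp only [mem_setOf_eq, lt_neg]
    rw [hsets]
    have hSmeas : MeasurableSet {q : ℝ × ℝ | q.1 < -s ∧ t < q.2} :=
      (measurableSet_lt measurable_fst measurable_const).inter
        (measurableSet_lt measurable_const measurable_snd)
    have hval : πs {q : ℝ × ℝ | q.1 < -s ∧ t < q.2}
        = volume ({p : ℝ | quantileFn u p < -s} ∩ {p : ℝ | t < quantileFn v p}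
            ∩ Ioo (0:ℝ) 1) := hπs_apply _ hSmeas
    rw [hval]
    have hcomm : {p : ℝ | quantileFn u p < -s} ∩ {p : ℝ | t < quantileFn v p}
        = {p : ℝ | t < quantileFn v p} ∩ {p : ℝ | quantileFn u p < -s} := inter_comm _ _
    calc volume ({p : ℝ | quantileFn u p < -s} ∩ {p : ℝ | t < quantileFn v p} ∩ Ioo (0:ℝ) 1)
        = volume ({p : ℝ | t < quantileFn v p} ∩ {p : ℝ | quantileFn u p < -s} ∩ Ioo (0:ℝ) 1) := by
          rw [hcomm]
      _ ≤ volume ({p : ℝ | t < quantileFn v p} ∩ Ioo (0:ℝ) 1)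
            + volume ({p : ℝ | quantileFn u p < -s} ∩ Ioo (0:ℝ) 1) - 1 :=
          inter_up_down (up_closed_quantile v t) (down_closed_quantile u (-s))
      _ = v (Ioi t) + u (Iio (-s)) - 1 := by rw [vol_up v t, vol_down u (-s)]
      _ ≤ π {q : ℝ × ℝ | q.1 < -s ∧ t < q.2} := by
          rw [tsub_le_iff_right]
          have hB : MeasurableSet {q : ℝ × ℝ | q.1 < -s} :=
            measurableSet_lt measurable_fst measurable_const
          have key := measure_union_add_inter (μ := π) {q : ℝ × ℝ | t < q.2} hB
          have hinter : {q : ℝ × ℝ | t < q.2} ∩ {q : ℝ × ℝ | q.1 < -s}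
              = {q : ℝ × ℝ | q.1 < -s ∧ t < q.2} := by
            ext q; simp only [mem_inter_iff, mem_setOf_eq, and_comm]
          calc v (Ioi t) + u (Iio (-s))
              = π {q : ℝ × ℝ | t < q.2} + π {q : ℝ × ℝ | q.1 < -s} := by
                rw [hπ_snd t, hπ_fst' (-s)]
            _ = π ({q : ℝ × ℝ | t < q.2} ∪ {q : ℝ × ℝ | q.1 < -s})
                + π {q : ℝ × ℝ | q.1 < -s ∧ t < q.2} := by rw [← key, hinter]
            _ ≤ π {q : ℝ × ℝ | q.1 < -s ∧ t < q.2} + 1 := by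
                rw [add_comm]
                exact add_le_add_right prob_le_one _
  -- second moments
  have msq1 : Measurable fun q : ℝ × ℝ => ENNReal.ofReal (q.1 ^ 2) :=
    (measurable_fst.pow_const 2).ennreal_ofReal
  have msq2 : Measurable fun q : ℝ × ℝ => ENNReal.ofReal (q.2 ^ 2) :=
    (measurable_snd.pow_const 2).ennreal_ofReal
  have hMx : ∀ (m : Measure (ℝ × ℝ)), m.map Prod.fst = u →
      (∫⁻ q, ENNReal.ofReal (q.1 ^ 2) ∂m) = ∫⁻ x, ENNReal.ofReal (x ^ 2) ∂u := by
    intro m hm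
    have hm2 : Measurable fun x : ℝ => ENNReal.ofReal (x ^ 2) :=
      (measurable_id.pow_const 2).ennreal_ofReal
    rw [← hm, lintegral_map hm2 measurable_fst]
  have hMy : ∀ (m : Measure (ℝ × ℝ)), m.map Prod.snd = v →
      (∫⁻ q, ENNReal.ofReal (q.2 ^ 2) ∂m) = ∫⁻ y, ENNReal.ofReal (y ^ 2) ∂v := by
    intro m hm
    have hm2 : Measurable fun y : ℝ => ENNReal.ofReal (y ^ 2) :=
      (measurable_id.pow_const 2).ennreal_ofReal
    rw [← hm, lintegral_map hm2 measurable_snd]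
  have hufin : (∫⁻ x, ENNReal.ofReal (x ^ 2) ∂u) < ⊤ := by
    calc (∫⁻ x, ENNReal.ofReal (x ^ 2) ∂u) = ∫⁻ x, ((‖x ^ 2‖₊ : NNReal) : ENNReal) ∂u :=
          lintegral_congr fun x => (Real.enorm_eq_ofReal (sq_nonneg x)).symm
      _ < ⊤ := hu.2
  have hvfin : (∫⁻ y, ENNReal.ofReal (y ^ 2) ∂v) < ⊤ := by
    calc (∫⁻ y, ENNReal.ofReal (y ^ 2) ∂v) = ∫⁻ y, ((‖y ^ 2‖₊ : NNReal) : ENNReal) ∂v :=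
          lintegral_congr fun y => (Real.enorm_eq_ofReal (sq_nonneg y)).symm
      _ < ⊤ := hv.2
  have hMfin : (∫⁻ x, ENNReal.ofReal (x ^ 2) ∂u) + (∫⁻ y, ENNReal.ofReal (y ^ 2) ∂v) ≠ ⊤ :=
    ENNReal.add_ne_top.mpr ⟨hufin.ne, hvfin.ne⟩
  -- finiteness of the A and D terms of πs
  have hsum_eq : (∫⁻ q, (ENNReal.ofReal (q.1 ^ 2) + ENNReal.ofReal (q.2 ^ 2)) ∂πs)
      = (∫⁻ x, ENNReal.ofReal (x ^ 2) ∂u) + (∫⁻ y, ENNReal.ofReal (y ^ 2) ∂v) := by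
    rw [lintegral_add_left msq1, hMx πs hfst, hMy πs hsnd]
  have hAs_le : (∫⁻ q, ENNReal.ofReal q.1 * ENNReal.ofReal q.2 ∂πs)
      ≤ (∫⁻ x, ENNReal.ofReal (x ^ 2) ∂u) + (∫⁻ y, ENNReal.ofReal (y ^ 2) ∂v) := by
    rw [← hsum_eq]
    exact lintegral_mono fun q => mul_le_sq_add_sq _ _
  have hDs_le : (∫⁻ q, ENNReal.ofReal (-q.1) * ENNReal.ofReal (-q.2) ∂πs)
      ≤ (∫⁻ x, ENNReal.ofReal (x ^ 2) ∂u) + (∫⁻ y, ENNReal.ofReal (y ^ 2) ∂v) := by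
    rw [← hsum_eq]
    refine lintegral_mono fun q => ?_
    have := mul_le_sq_add_sq (-q.1) (-q.2)
    simpa [neg_sq] using this
  have hADfin : (2 * ∫⁻ q, ENNReal.ofReal q.1 * ENNReal.ofReal q.2 ∂πs
      + 2 * ∫⁻ q, ENNReal.ofReal (-q.1) * ENNReal.ofReal (-q.2) ∂πs) ≠ ⊤ := by
    refine ENNReal.add_ne_top.mpr ⟨?_, ?_⟩
    · exact ENNReal.mul_ne_top (by norm_num) (lt_of_le_of_lt hAs_le
        (lt_of_le_of_ne le_top hMfin)).ne
    · exact ENNReal.mul_ne_top (by norm_num) (lt_of_le_of_lt hDs_le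
        (lt_of_le_of_ne le_top hMfin)).ne
  -- the two splitting identities
  have E1 := split_identity πs
  have E2 := split_identity π
  rw [hMx πs hfst, hMy πs hsnd] at E1
  rw [hMx π h1, hMy π h2] at E2
  -- assemble
  have main : (∫⁻ q, ENNReal.ofReal ((q.1 - q.2) ^ 2) ∂πs)
      + (2 * ∫⁻ q, ENNReal.ofReal q.1 * ENNReal.ofReal q.2 ∂πs
        + 2 * ∫⁻ q, ENNReal.ofReal (-q.1) * ENNReal.ofReal (-q.2) ∂πs)
      ≤ (∫⁻ q, ENNReal.ofReal ((q.1 - q.2) ^ 2) ∂π)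
      + (2 * ∫⁻ q, ENNReal.ofReal q.1 * ENNReal.ofReal q.2 ∂πs
        + 2 * ∫⁻ q, ENNReal.ofReal (-q.1) * ENNReal.ofReal (-q.2) ∂πs) := by
    calc (∫⁻ q, ENNReal.ofReal ((q.1 - q.2) ^ 2) ∂πs)
        + (2 * ∫⁻ q, ENNReal.ofReal q.1 * ENNReal.ofReal q.2 ∂πs
          + 2 * ∫⁻ q, ENNReal.ofReal (-q.1) * ENNReal.ofReal (-q.2) ∂πs)
        = ((∫⁻ x, ENNReal.ofReal (x ^ 2) ∂u) + (∫⁻ y, ENNReal.ofReal (y ^ 2) ∂v))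
          + (2 * ∫⁻ q, ENNReal.ofReal q.1 * ENNReal.ofReal (-q.2) ∂πs
            + 2 * ∫⁻ q, ENNReal.ofReal (-q.1) * ENNReal.ofReal q.2 ∂πs) := E1
      _ ≤ ((∫⁻ x, ENNReal.ofReal (x ^ 2) ∂u) + (∫⁻ y, ENNReal.ofReal (y ^ 2) ∂v))
          + (2 * ∫⁻ q, ENNReal.ofReal q.1 * ENNReal.ofReal (-q.2) ∂π
            + 2 * ∫⁻ q, ENNReal.ofReal (-q.1) * ENNReal.ofReal q.2 ∂π) :=
          add_le_add_right (add_le_add (mul_le_mul_right cmpB 2) (mul_le_mul_right cmpC 2)) _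
      _ = (∫⁻ q, ENNReal.ofReal ((q.1 - q.2) ^ 2) ∂π)
          + (2 * ∫⁻ q, ENNReal.ofReal q.1 * ENNReal.ofReal q.2 ∂π
            + 2 * ∫⁻ q, ENNReal.ofReal (-q.1) * ENNReal.ofReal (-q.2) ∂π) := E2.symm
      _ ≤ _ :=
          add_le_add_right (add_le_add (mul_le_mul_right cmpA 2) (mul_le_mul_right cmpD 2)) _
  exact (ENNReal.add_le_add_iff_right hADfin).mp main
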